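/- Let Q be a right Bol loop. Then for each u in the right nucleus of Q, each v ∈ Q, and each integer n ≥ 0, u T_{v^n} = u T_v^n (the n-th iterate of T_v applied to u), where T_x(w) = x\(wx). -/
import Mathlib


/-- A right Bol loop. -/
class RightBolLoop (Q : Type*) extends Mul Q, One Q, Inv Q where
  one_mul : ∀ a : Q, 1 * a = a
  mul_one : ∀ a : Q, a * 1 = a
  mulLeft_bij : ∀ a : Q, Function.Bijective (fun x : Q => a * x)
  mulRight_bij : ∀ a : Q, Function.Bijective (fun x : Q => x * a)
  mul_inv : ∀ a : Q, a * a⁻¹ = 1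
  inv_mul : ∀ a : Q, a⁻¹ * a = 1
  rbol : ∀ w u v : Q, ((w * u) * v) * u = w * ((u * v) * u)

variable {Q : Type*} [RightBolLoop Q]

/-- Left division: `ldiv u v = u \ v` is the unique `x` with `u·x = v`. -/
noncomputable def ldiv (u v : Q) : Q :=
  (Equiv.ofBijective _ (RightBolLoop.mulLeft_bij u)).symm v

/-- The map `T_x : w ↦ x \ (w·x)`. -/
noncomputable def Tm (x w : Q) : Q := ldiv x (w * x)

/-- Natural powers in the loop. -/
def lpow (a : Q) : ℕ → Q
  | 0 => 1
  | n + 1 => lpow a n * a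

/-- The right nucleus of `Q`. -/
def rightNucleus (Q : Type*) [RightBolLoop Q] : Set Q :=
  {w : Q | ∀ a b : Q, a * (b * w) = (a * b) * w}

/- ### Auxiliary lemmas -/

lemma my_mul_ldiv (a b : Q) : a * ldiv a b = b :=
  (Equiv.ofBijective _ (RightBolLoop.mulLeft_bij a)).apply_symm_apply b

lemma my_ldiv_eq {a b c : Q} (h : a * c = b) : ldiv a b = c :=
  (RightBolLoop.mulLeft_bij a).injective (by rw [my_mul_ldiv, h])

lemma my_right_cancel {a b : Q} (v : Q) (h : a * v = b * v) : a = b :=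
  (RightBolLoop.mulRight_bij v).injective h

/-- Right alternative law. -/
lemma my_right_alt (a v : Q) : (a * v) * v = a * (v * v) := by
  have h := RightBolLoop.rbol a v 1
  rwa [RightBolLoop.mul_one, RightBolLoop.mul_one] at h

/-- The right nucleus is contained in the middle nucleus. -/
lemma my_mid {u : Q} (hu : u ∈ rightNucleus Q) (a b : Q) :
    (a * u) * b = a * (u * b) := by
  apply my_right_cancel u
  rw [RightBolLoop.rbol, hu a (u * b)]

lemma my_mul_Tm (v u : Q) : v * Tm v u = u * v := my_mul_ldiv v (u * v)

lemma my_ldiv_mul_nuc {u : Q} (hu : u ∈ rightNucleus Q) (v x : Q) :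
    ldiv v (x * u) = (ldiv v x) * u := by
  apply my_ldiv_eq
  rw [hu v (ldiv v x), my_mul_ldiv]

/-- conjugation form of right Bol. -/
lemma my_star (w z v : Q) : ((w * v) * ldiv v z) * v = w * (z * v) := by
  rw [RightBolLoop.rbol, my_mul_ldiv]

/-- key identity: `(x·v)·T_v(u) = (x·u)·v` for `u` in the right nucleus. -/
lemma my_ast {u : Q} (hu : u ∈ rightNucleus Q) (v x : Q) :
    (x * v) * Tm v u = (x * u) * v := by
  apply my_right_cancel v
  rw [RightBolLoop.rbol, my_mul_Tm, my_right_alt u v, ← my_mid hu x (v * v),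
    ← my_right_alt (x * u) v]

/-- `T_v` preserves the right nucleus. -/
lemma my_Tm_mem {u : Q} (hu : u ∈ rightNucleus Q) (v : Q) :
    Tm v u ∈ rightNucleus Q := by
  intro a b
  obtain ⟨x, hx⟩ := (RightBolLoop.mulRight_bij v).surjective b
  simp only at hx
  subst hx
  rw [my_ast hu v x, ← my_star a (x * u) v, my_ldiv_mul_nuc hu v x,
    hu (a * v) (ldiv v x), ← my_star a x v, my_ast hu v ((a * v) * ldiv v x)]

/-- `R_{vⁿ} = R_vⁿ`. -/
lemma my_lpow_R (v : Q) : ∀ n : ℕ,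
    (∀ w : Q, w * lpow v n = (fun z : Q => z * v)^[n] w) ∧
    (∀ w : Q, w * lpow v (n + 1) = (fun z : Q => z * v)^[n + 1] w) := by
  intro n
  induction n with
  | zero =>
    constructor
    · intro w; simpa [lpow] using RightBolLoop.mul_one w
    · intro w; simp [lpow, RightBolLoop.one_mul]
  | succ n ih =>
    obtain ⟨h1, h2⟩ := ih
    refine ⟨h2, ?_⟩
    have hv : v * lpow v n = lpow v (n + 1) := by
      have ha := h1 v
      have hb := h2 1
      rw [RightBolLoop.one_mul] at hb
      rw [ha, hb, Function.iterate_succ_apply]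
      have : (1 : Q) * v = v := RightBolLoop.one_mul v
      simp only [this]
    intro w
    have key : lpow v (n + 2) = (v * lpow v n) * v := by
      rw [hv]; rfl
    rw [key, ← RightBolLoop.rbol w v (lpow v n), h1 (w * v)]
    rw [Function.iterate_succ_apply' (fun z : Q => z * v) (n + 1) w,
      Function.iterate_succ_apply (fun z : Q => z * v) n w]

lemma my_mul_lpow_succ (v w : Q) (n : ℕ) :
    w * lpow v (n + 1) = (w * lpow v n) * v := by
  obtain ⟨h1, h2⟩ := my_lpow_R v n
  rw [h1, h2, Function.iterate_succ_apply' (fun z : Q => z * v) n w]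

lemma my_iter_mem {u : Q} (hu : u ∈ rightNucleus Q) (v : Q) (n : ℕ) :
    (Tm v)^[n] u ∈ rightNucleus Q := by
  induction n with
  | zero => exact hu
  | succ n ih =>
    rw [Function.iterate_succ_apply']
    exact my_Tm_mem ih v

/-- Let `Q` be a right Bol loop. For each `u` in the right nucleus,
each `v ∈ Q` and each `n ≥ 0`, `u T_{vⁿ} = u T_vⁿ` (the `n`-th iterate
of `T_v` applied to `u`). -/
theorem stmt16 (u : Q) (hu : u ∈ rightNucleus Q) (v : Q) (n : ℕ) :
    Tm (lpow v n) u = (Tm v)^[n] u := by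
  induction n with
  | zero =>
    show Tm (1 : Q) u = u
    exact my_ldiv_eq (by rw [RightBolLoop.one_mul, RightBolLoop.mul_one])
  | succ n ih =>
    set t := (Tm v)^[n] u with ht_def
    have ht : t ∈ rightNucleus Q := my_iter_mem hu v n
    have hs : Tm v t ∈ rightNucleus Q := my_Tm_mem ht v
    rw [Function.iterate_succ_apply']
    apply my_ldiv_eq
    show lpow v (n + 1) * Tm v t = u * lpow v (n + 1)
    have step1 : lpow v (n + 1) * Tm v t = lpow v n * (v * Tm v t) := by
      show (lpow v n * v) * Tm v t = _
      rw [← hs (lpow v n) v]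
    have hlt : lpow v n * t = u * lpow v n := by
      rw [← ih]; exact my_mul_ldiv _ _
    rw [step1, my_mul_Tm v t, ← my_mid ht (lpow v n) v, hlt,
      my_mul_lpow_succ v u n]
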